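/- arXiv:2204.04808 — 3 statements merged into one kernel-verified Lean document; each statement's English description precedes it below -/
import Mathlib

section
/- Let H be a real-valued square-integrable random variable, let δ > 0, and let B be a random variable uniform on {−1, 1} independent of H. Define the δ-transformation H̃ = H·1{|H| ≥ δ} + (H + 2δB)·1{|H| < δ}. Then: (i) |H̃| ≥ δ almost surely; (ii) E[H̃] = E[H]; and (iii) Var[H̃] = Var[H] + 4δ²·P(|H| < δ), and in particular Var[H̃] ≤ Var[H] + 4δ². -/
open MeasureTheory ProbabilityTheory

/-!
Write `H̃ = H + B φ(H)` with `φ = 2δ · 1{|·| < δ}`. Since `B` is centred and independent of `H`,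
the perturbation `B φ(H)` has mean zero and is uncorrelated with `H`; since `B² = 1`, its
variance is `E[φ(H)²] = 4δ² P(|H| < δ)`.
-/

section SymmetricSign

variable {Ω : Type*} [MeasurableSpace Ω] {μ : Measure Ω} [IsProbabilityMeasure μ] {B : Ω → ℝ}

lemma ae_eq_one_or_eq_neg_one_of_measure_eq_half (hB : Measurable B)
    (h1 : μ {ω | B ω = 1} = 1 / 2) (hneg1 : μ {ω | B ω = -1} = 1 / 2) :
    ∀ᵐ ω ∂μ, B ω = 1 ∨ B ω = -1 := by
  have hA1 : MeasurableSet {ω | B ω = 1} := hB (measurableSet_singleton 1)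
  have hA2 : MeasurableSet {ω | B ω = -1} := hB (measurableSet_singleton (-1))
  have hdisj : Disjoint {ω | B ω = 1} {ω | B ω = -1} :=
    Set.disjoint_left.mpr fun ω (hω1 : B ω = 1) (hω2 : B ω = -1) => by norm_num [hω1] at hω2
  have hunion : μ ({ω | B ω = 1} ∪ {ω | B ω = -1}) = 1 := by
    rw [measure_union hdisj hA2, h1, hneg1, ENNReal.add_halves]
  rw [ae_iff, show {ω | ¬(B ω = 1 ∨ B ω = -1)} = ({ω | B ω = 1} ∪ {ω | B ω = -1})ᶜ by ext; simp]
  exact (prob_compl_eq_zero_iff (hA1.union hA2)).mpr hunion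

lemma integral_eq_zero_of_measure_eq_half (hB : Measurable B)
    (h1 : μ {ω | B ω = 1} = 1 / 2) (hneg1 : μ {ω | B ω = -1} = 1 / 2) :
    ∫ ω, B ω ∂μ = 0 := by
  have hA1 : MeasurableSet {ω | B ω = 1} := hB (measurableSet_singleton 1)
  have hA2 : MeasurableSet {ω | B ω = -1} := hB (measurableSet_singleton (-1))
  have hB_ae : B =ᵐ[μ] {ω | B ω = 1}.indicator 1 - {ω | B ω = -1}.indicator 1 := by
    filter_upwards [ae_eq_one_or_eq_neg_one_of_measure_eq_half hB h1 hneg1] with ω hω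
    rcases hω with hω | hω <;> norm_num [Set.indicator, hω]
  rw [integral_congr_ae hB_ae, integral_sub' ((integrable_const 1).indicator hA1)
    ((integrable_const 1).indicator hA2), integral_indicator_one hA1, integral_indicator_one hA2,
    measureReal_def, measureReal_def, h1, hneg1, sub_self]

end SymmetricSign

section SignPerturbation

variable {Ω : Type*} [MeasurableSpace Ω] {μ : Measure Ω} {H B : Ω → ℝ} {φ : ℝ → ℝ}

lemma integral_mul_comp_eq_zero_of_indepFun (hindep : IndepFun B H μ)
    (hB : AEStronglyMeasurable B μ) (hH : AEMeasurable H μ) (hφ : Measurable φ)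
    (hB0 : ∫ ω, B ω ∂μ = 0) :
    ∫ ω, B ω * φ (H ω) ∂μ = 0 := by
  have hindepφ : IndepFun B (fun ω => φ (H ω)) μ := hindep.comp measurable_id hφ
  rw [hindepφ.integral_fun_mul_eq_mul_integral hB
    (hφ.comp_aemeasurable hH).aestronglyMeasurable, hB0, zero_mul]

lemma memLp_mul_of_ae_abs_eq_one {Y : Ω → ℝ} {p : ENNReal} (hB : AEStronglyMeasurable B μ)
    (hB1 : ∀ᵐ ω ∂μ, |B ω| = 1) (hY : MemLp Y p μ) :
    MemLp (fun ω => B ω * Y ω) p μ :=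
  hY.of_le (hB.mul hY.aestronglyMeasurable) <| by
    filter_upwards [hB1] with ω hω
    rw [norm_mul, Real.norm_eq_abs, hω, one_mul]

variable (hindep : IndepFun B H μ) (hB : AEStronglyMeasurable B μ)
  (hB1 : ∀ᵐ ω ∂μ, |B ω| = 1) (hB0 : ∫ ω, B ω ∂μ = 0) (hφ : Measurable φ)
include hindep hB hB1 hB0 hφ

lemma integral_add_mul_comp (hH : Integrable H μ) (hY : Integrable (fun ω => φ (H ω)) μ) :
    ∫ ω, H ω + B ω * φ (H ω) ∂μ = ∫ ω, H ω ∂μ := by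
  have hK := memLp_mul_of_ae_abs_eq_one hB hB1 (memLp_one_iff_integrable.mpr hY)
  rw [integral_add hH (memLp_one_iff_integrable.mp hK),
    integral_mul_comp_eq_zero_of_indepFun hindep hB hH.aemeasurable hφ hB0, add_zero]

lemma variance_add_mul_comp [IsProbabilityMeasure μ] (hH : MemLp H 2 μ)
    (hY : MemLp (fun ω => φ (H ω)) 2 μ) :
    Var[fun ω => H ω + B ω * φ (H ω); μ] = Var[H; μ] + ∫ ω, φ (H ω) ^ 2 ∂μ := by
  have hK := memLp_mul_of_ae_abs_eq_one hB hB1 hY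
  have hK0 : ∫ ω, B ω * φ (H ω) ∂μ = 0 :=
    integral_mul_comp_eq_zero_of_indepFun hindep hB hH.aemeasurable hφ hB0
  -- `H φ(H)` is again a function of `H`, so the cross term vanishes as well
  have hcov : cov[H, fun ω => B ω * φ (H ω); μ] = 0 := by
    rw [covariance_eq_sub hH hK, hK0, mul_zero, sub_zero]
    simpa only [Pi.mul_apply, mul_left_comm (H _)] using
      integral_mul_comp_eq_zero_of_indepFun hindep hB hH.aemeasurable
        (measurable_id'.mul hφ) hB0
  have hvarK : Var[fun ω => B ω * φ (H ω); μ] = ∫ ω, φ (H ω) ^ 2 ∂μ := by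
    rw [variance_eq_sub hK]
    simp only [Pi.pow_apply]
    rw [hK0, sq (0 : ℝ), mul_zero, sub_zero]
    refine integral_congr_ae ?_
    filter_upwards [hB1] with ω hω
    rw [mul_pow, ← sq_abs (B ω), hω, one_pow, one_mul]
  rw [variance_fun_add hH hK, hcov, hvarK, mul_zero, add_zero]

end SignPerturbation

section IndicatorComp

variable {Ω : Type*} [MeasurableSpace Ω] {μ : Measure Ω} {H : Ω → ℝ} {s : Set ℝ}

lemma memLp_indicator_const_comp [IsFiniteMeasure μ] (hs : MeasurableSet s)
    (hH : AEMeasurable H μ) (c : ℝ) (p : ENNReal) :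
    MemLp (fun ω => s.indicator (fun _ => c) (H ω)) p μ :=
  MemLp.of_bound ((measurable_const.indicator hs).comp_aemeasurable hH).aestronglyMeasurable ‖c‖
    (.of_forall fun _ => norm_indicator_le_norm_self _ _)

lemma integral_indicator_const_comp_sq (hs : MeasurableSet s) (hH : AEMeasurable H μ) (c : ℝ) :
    ∫ ω, s.indicator (fun _ => c) (H ω) ^ 2 ∂μ = c ^ 2 * μ.real (H ⁻¹' s) := by
  have hsq : (fun ω => s.indicator (fun _ => c) (H ω) ^ 2) =
      (H ⁻¹' s).indicator fun _ => c ^ 2 := by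
    ext ω; by_cases h : H ω ∈ s <;> simp [h]
  rw [hsq, integral_indicator₀ (hH.nullMeasurable hs), setIntegral_const, smul_eq_mul, mul_comm]

end IndicatorComp

lemma ite_abs_le_eq_add_mul_indicator (δ x b : ℝ) :
    (if δ ≤ |x| then x else x + 2 * δ * b) =
      x + b * {y : ℝ | |y| < δ}.indicator (fun _ => 2 * δ) x := by
  by_cases h : δ ≤ |x|
  · simp [h]
  · simp [h, not_le.mp h, mul_comm]

lemma le_abs_ite_abs_le {δ x b : ℝ} (hb : b = 1 ∨ b = -1) :
    δ ≤ |if δ ≤ |x| then x else x + 2 * δ * b| := by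
  split_ifs with hx
  · exact hx
  obtain ⟨hlo, hhi⟩ := abs_lt.mp (not_le.mp hx)
  rcases hb with rfl | rfl <;> rw [le_abs] <;> [left; right] <;> linarith

theorem delta_transformation_general
    {Ω : Type*} [MeasurableSpace Ω] (μ : Measure Ω) [IsProbabilityMeasure μ]
    (H B : Ω → ℝ) (hH : MemLp H 2 μ) (hBmeas : Measurable B)
    (hB1 : μ {ω | B ω = 1} = 1/2) (hBneg1 : μ {ω | B ω = -1} = 1/2)
    (hindep : IndepFun B H μ)
    (δ : ℝ)
    (Htilde : Ω → ℝ)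
    (hHtilde : Htilde = fun ω => if δ ≤ |H ω| then H ω else H ω + 2 * δ * B ω) :
    (∀ᵐ ω ∂μ, δ ≤ |Htilde ω|) ∧
    (∫ ω, Htilde ω ∂μ = ∫ ω, H ω ∂μ) ∧
    (variance Htilde μ = variance H μ + 4 * δ ^ 2 * (μ {ω | |H ω| < δ}).toReal) ∧
    (variance Htilde μ ≤ variance H μ + 4 * δ ^ 2) := by
  set s : Set ℝ := {y | |y| < δ}
  have hs : MeasurableSet s := measurableSet_lt measurable_abs measurable_const
  have hφ : Measurable (s.indicator fun _ => 2 * δ) := measurable_const.indicator hs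
  have hY := memLp_indicator_const_comp (μ := μ) hs hH.aemeasurable (2 * δ)
  have hsign := ae_eq_one_or_eq_neg_one_of_measure_eq_half hBmeas hB1 hBneg1
  have hB0 := integral_eq_zero_of_measure_eq_half hBmeas hB1 hBneg1
  have habs : ∀ᵐ ω ∂μ, |B ω| = 1 := by
    filter_upwards [hsign] with ω hω
    rcases hω with hω | hω <;> simp [hω]
  have hrep : Htilde = fun ω => H ω + B ω * s.indicator (fun _ => 2 * δ) (H ω) :=
    hHtilde.trans (funext fun ω => ite_abs_le_eq_add_mul_indicator δ (H ω) (B ω))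
  have hvar : variance Htilde μ = variance H μ + 4 * δ ^ 2 * μ.real (H ⁻¹' s) := by
    rw [hrep, variance_add_mul_comp hindep hBmeas.aestronglyMeasurable habs hB0 hφ hH (hY 2),
      integral_indicator_const_comp_sq hs hH.aemeasurable, mul_pow]
    norm_num
  refine ⟨?_, ?_, hvar, ?_⟩
  · filter_upwards [hsign] with ω hω
    simpa only [hHtilde] using le_abs_ite_abs_le hω
  · rw [hrep]
    exact integral_add_mul_comp hindep hBmeas.aestronglyMeasurable habs hB0 hφ
      (hH.integrable one_le_two) (memLp_one_iff_integrable.mp (hY 1))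
  · have hprob : μ.real (H ⁻¹' s) ≤ 1 := measureReal_le_one
    rw [hvar]
    nlinarith [sq_nonneg δ]

/-- **The δ-transformation.**  Let `H` be a real-valued square-integrable random variable,
`δ > 0`, and `B` a random variable uniform on `{-1, 1}` independent of `H`.  Define
`H̃ = H·1{|H| ≥ δ} + (H + 2δB)·1{|H| < δ}`.  Then `|H̃| ≥ δ` a.s., `E[H̃] = E[H]`,
`Var[H̃] = Var[H] + 4δ²·P(|H| < δ)`, and in particular `Var[H̃] ≤ Var[H] + 4δ²`. -/
theorem delta_transformation
    {Ω : Type*} [MeasurableSpace Ω] (μ : Measure Ω) [IsProbabilityMeasure μ]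
    (H B : Ω → ℝ) (hH : MemLp H 2 μ) (hHmeas : Measurable H) (hBmeas : Measurable B)
    (hB1 : μ {ω | B ω = 1} = 1/2) (hBneg1 : μ {ω | B ω = -1} = 1/2)
    (hindep : IndepFun B H μ)
    (δ : ℝ) (hδ : 0 < δ)
    (Htilde : Ω → ℝ)
    (hHtilde : Htilde = fun ω => if δ ≤ |H ω| then H ω else H ω + 2 * δ * B ω) :
    (∀ᵐ ω ∂μ, δ ≤ |Htilde ω|) ∧
    (∫ ω, Htilde ω ∂μ = ∫ ω, H ω ∂μ) ∧
    (variance Htilde μ = variance H μ + 4 * δ ^ 2 * (μ {ω | |H ω| < δ}).toReal) ∧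
    (variance Htilde μ ≤ variance H μ + 4 * δ ^ 2) :=
  delta_transformation_general μ H B hH hBmeas hB1 hBneg1 hindep δ Htilde hHtilde
end

section
/- For every real p ≥ 2 there exists a constant C_p > 0, depending only on p, such that for every n ≥ 1 and every i.i.d. sequence X_1, …, X_n of real random variables with E[X_1] = 0 and E[|X_1|^p] < ∞, one has E[ |(1/n) Σ_{i=1}^n X_i|^p ] ≤ C_p · E[|X_1|^p] / n^{p/2}. -/
/-!
Write `S_k = X_1 + ⋯ + X_k` and `φ x = |x|^(p-2) x`, so that `p φ` is the derivative of `|x|^p`.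
The mean value theorem and `(φ u - φ v) (u - v) ≤ (p-1) (|u| + |v|)^(p-2) (u - v)²` give, pointwise,
`|a + b|^p ≤ |a|^p + p φ(a) b + D_p (|a|^(p-2) b² + |b|^p)` with `D_p = p (p-1) 4^(p-2)`.
Take `a = S_k`, `b = X_(k+1)` and integrate: by independence the linear term vanishes and
`E |S_k|^(p-2) X²` factorises, and Lyapunov's inequality bounds the factors by
`(E |S_k|^p)^((p-2)/p) (E |X|^p)^(2/p)`. The resulting recursion for `E |S_k|^p` propagates
the bound `((2 D_p + 1) k)^(p/2) E |X|^p`, and dividing by `n^p` gives the theorem.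
-/

open MeasureTheory ProbabilityTheory Finset

namespace Real

theorem rpow_add_mul_sub_le_rpow {x y q : ℝ} (hx : 0 ≤ x) (hy : 0 ≤ y) (hq : 1 ≤ q) :
    x ^ q + q * x ^ (q - 1) * (y - x) ≤ y ^ q := by
  rcases hx.eq_or_lt with rfl | hx
  · rcases hq.eq_or_lt with rfl | hq
    · simp
    · simp [zero_rpow (by linarith : q ≠ 0), zero_rpow (by linarith : q - 1 ≠ 0),
        rpow_nonneg hy]
  · have bernoulli := one_add_mul_self_le_rpow_one_add
      (by linarith [div_nonneg hy hx.le] : -1 ≤ y / x - 1) hq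
    rw [add_sub_cancel, div_rpow hy hx.le, le_div_iff₀ (rpow_pos_of_pos hx q)] at bernoulli
    have hx1 : x ^ q = x ^ (q - 1) * x := by
      rw [← rpow_add_one hx.ne']; ring_nf
    calc x ^ q + q * x ^ (q - 1) * (y - x) = (1 + q * (y / x - 1)) * x ^ q := by
          rw [hx1]; field_simp
      _ ≤ y ^ q := bernoulli

theorem rpow_sub_two_mul_self {x p : ℝ} (hx : 0 ≤ x) (hp : p ≠ 1) :
    x ^ (p - 2) * x = x ^ (p - 1) := by
  rw [← rpow_add_one' hx (by contrapose! hp; linarith)]; ring_nf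

theorem continuous_abs_rpow_mul_self {r : ℝ} (hr : 0 ≤ r) : Continuous fun x : ℝ => |x| ^ r * x :=
  (continuous_abs.rpow_const fun _ => .inr hr).mul continuous_id

theorem rpow_le_four_rpow_mul_add_rpow {x y z r : ℝ} (hx : 0 ≤ x) (hy : 0 ≤ y) (hz : 0 ≤ z)
    (hzxy : z ≤ 2 * (x + y)) (hr : 0 ≤ r) : z ^ r ≤ 4 ^ r * (x ^ r + y ^ r) := by
  have hmax : max x y ^ r ≤ x ^ r + y ^ r := by
    rcases max_cases x y with ⟨h, -⟩ | ⟨h, -⟩ <;> rw [h] <;>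
      linarith [rpow_nonneg hx r, rpow_nonneg hy r]
  calc z ^ r ≤ (4 * max x y) ^ r :=
        rpow_le_rpow hz (by linarith [le_max_left x y, le_max_right x y]) hr
    _ = 4 ^ r * max x y ^ r := mul_rpow zero_le_four (le_max_of_le_left hx)
    _ ≤ 4 ^ r * (x ^ r + y ^ r) := by gcongr

theorem rpow_mul_rpow_le_one_add_rpow_add_rpow {x y α β p : ℝ} (hx : 0 ≤ x) (hy : 0 ≤ y)
    (hα : 0 ≤ α) (hβ : 0 ≤ β) (hp : α + β ≤ p) : x ^ α * y ^ β ≤ 1 + x ^ p + y ^ p := by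
  have hm : 1 ≤ max 1 (max x y) := le_max_left _ _
  have hmp : max 1 (max x y) ^ p ≤ 1 + x ^ p + y ^ p := by
    have hxp := rpow_nonneg hx p
    have hyp := rpow_nonneg hy p
    rcases max_cases 1 (max x y) with ⟨h, -⟩ | ⟨h, -⟩ <;> rw [h]
    · rw [one_rpow]; linarith
    · rcases max_cases x y with ⟨h, -⟩ | ⟨h, -⟩ <;> rw [h] <;> linarith
  calc x ^ α * y ^ β ≤ max 1 (max x y) ^ α * max 1 (max x y) ^ β := by
        gcongr
        · exact (le_max_left x y).trans (le_max_right _ _)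
        · exact (le_max_right x y).trans (le_max_right _ _)
    _ = max 1 (max x y) ^ (α + β) := (rpow_add (by linarith) α β).symm
    _ ≤ max 1 (max x y) ^ p := rpow_le_rpow_of_exponent_le hm hp
    _ ≤ 1 + x ^ p + y ^ p := hmp

theorem rpow_add_mul_rpow_sub_one_add_one_le {x q D : ℝ} (hx : 0 ≤ x) (hq : 1 ≤ q)
    (hD : 0 ≤ D) : x ^ q + D * (x ^ (q - 1) + 1) ≤ (x + (2 * D + 1)) ^ q := by
  set L := 2 * D + 1
  have tangent := rpow_add_mul_sub_le_rpow hx (by positivity : 0 ≤ x + L) hq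
  have superadd := add_rpow_le_rpow_add hx (by positivity : 0 ≤ L) hq
  have hL : L ≤ L ^ q := self_le_rpow_of_one_le (by linarith) hq
  have hxq : 0 ≤ x ^ (q - 1) := rpow_nonneg hx _
  nlinarith

/-- The induction step for `E |S_k|^p ≤ ((2 D + 1) k)^(p/2) E |X|^p`, with `a = E |S_k|^p` and
`b = E |X|^p`. -/
theorem add_mul_rpow_mul_rpow_add_le {p D a b k : ℝ} (hp : 2 ≤ p) (hD : 0 ≤ D) (ha : 0 ≤ a)
    (hb : 0 ≤ b) (hk : 0 ≤ k) (hak : a ≤ ((2 * D + 1) * k) ^ (p / 2) * b) :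
    a + D * (a ^ ((p - 2) / p) * b ^ (2 / p) + b) ≤ ((2 * D + 1) * (k + 1)) ^ (p / 2) * b := by
  have hp0 : 0 < p := by linarith
  set x := (2 * D + 1) * k
  have hx : 0 ≤ x := by positivity
  have hxq : 0 ≤ x ^ (p / 2) := rpow_nonneg hx _
  have hpow : a ^ ((p - 2) / p) * b ^ (2 / p) ≤ x ^ (p / 2 - 1) * b := calc
    a ^ ((p - 2) / p) * b ^ (2 / p) ≤ (x ^ (p / 2) * b) ^ ((p - 2) / p) * b ^ (2 / p) := by
        gcongr
    _ = x ^ (p / 2 - 1) * (b ^ ((p - 2) / p) * b ^ (2 / p)) := by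
        rw [mul_rpow hxq hb, ← rpow_mul hx]
        field_simp
    _ = x ^ (p / 2 - 1) * b := by
        have hexp : (p - 2) / p + 2 / p = 1 := by rw [← add_div, sub_add_cancel, div_self hp0.ne']
        rw [← rpow_add' hb (by rw [hexp]; exact one_ne_zero), hexp, rpow_one]
  have core := rpow_add_mul_rpow_sub_one_add_one_le hx (by linarith : 1 ≤ p / 2) hD
  rw [show x + (2 * D + 1) = (2 * D + 1) * (k + 1) by ring] at core
  nlinarith

theorem rpow_sub_two_mul_self_sub_le {p x y : ℝ} (hp : 2 ≤ p) (hy : 0 ≤ y) (hyx : y ≤ x) :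
    x ^ (p - 2) * x - y ^ (p - 2) * y ≤ (p - 1) * x ^ (p - 2) * (x - y) := by
  have hp1 : p ≠ 1 := by linarith
  have tangent := rpow_add_mul_sub_le_rpow (hy.trans hyx) hy (by linarith : 1 ≤ p - 1)
  rw [show p - 1 - 1 = p - 2 by ring] at tangent
  rw [rpow_sub_two_mul_self (hy.trans hyx) hp1, rpow_sub_two_mul_self hy hp1]
  linarith

theorem abs_rpow_sub_two_mul_sub_le {p u v : ℝ} (hp : 2 ≤ p) (hvu : v ≤ u) :
    |u| ^ (p - 2) * u - |v| ^ (p - 2) * v ≤ (p - 1) * (|u| + |v|) ^ (p - 2) * (u - v) := by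
  have hp2 : 0 ≤ p - 2 := by linarith
  rcases le_total 0 v with hv | hv
  · have hu := hv.trans hvu
    rw [abs_of_nonneg hu, abs_of_nonneg hv]
    calc u ^ (p - 2) * u - v ^ (p - 2) * v ≤ (p - 1) * u ^ (p - 2) * (u - v) :=
          rpow_sub_two_mul_self_sub_le hp hv hvu
      _ ≤ (p - 1) * (u + v) ^ (p - 2) * (u - v) := by gcongr <;> linarith
  rcases le_total u 0 with hu | hu
  · rw [abs_of_nonpos hu, abs_of_nonpos hv]
    calc (-u) ^ (p - 2) * u - (-v) ^ (p - 2) * v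
        = (-v) ^ (p - 2) * -v - (-u) ^ (p - 2) * -u := by ring
      _ ≤ (p - 1) * (-v) ^ (p - 2) * (-v - -u) :=
          rpow_sub_two_mul_self_sub_le hp (by linarith) (by linarith)
      _ ≤ (p - 1) * (-u + -v) ^ (p - 2) * (u - v) := by
          rw [neg_sub_neg]
          gcongr <;> linarith
  · rw [abs_of_nonneg hu, abs_of_nonpos hv]
    have hu' : u ^ (p - 2) ≤ (u + -v) ^ (p - 2) := by gcongr; linarith
    have hv' : (-v) ^ (p - 2) ≤ (u + -v) ^ (p - 2) := by gcongr <;> linarith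
    have hw : 0 ≤ (u + -v) ^ (p - 2) * (u - v) :=
      mul_nonneg (rpow_nonneg (by linarith) _) (by linarith)
    calc u ^ (p - 2) * u - (-v) ^ (p - 2) * v = u ^ (p - 2) * u + (-v) ^ (p - 2) * -v := by ring
      _ ≤ (u + -v) ^ (p - 2) * u + (u + -v) ^ (p - 2) * -v := by gcongr; linarith
      _ ≤ (p - 1) * (u + -v) ^ (p - 2) * (u - v) := by nlinarith

theorem abs_rpow_sub_two_mul_sub_mul_sub_le {p : ℝ} (hp : 2 ≤ p) (u v : ℝ) :
    (|u| ^ (p - 2) * u - |v| ^ (p - 2) * v) * (u - v)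
      ≤ (p - 1) * (|u| + |v|) ^ (p - 2) * (u - v) ^ 2 := by
  wlog hvu : v ≤ u generalizing u v
  · have := this v u (le_of_not_ge hvu)
    rw [add_comm]
    linarith
  calc (|u| ^ (p - 2) * u - |v| ^ (p - 2) * v) * (u - v)
      ≤ ((p - 1) * (|u| + |v|) ^ (p - 2) * (u - v)) * (u - v) :=
        mul_le_mul_of_nonneg_right (abs_rpow_sub_two_mul_sub_le hp hvu) (sub_nonneg.2 hvu)
    _ = (p - 1) * (|u| + |v|) ^ (p - 2) * (u - v) ^ 2 := by ring

theorem exists_abs_add_rpow_eq {p : ℝ} (hp : 1 < p) (a b : ℝ) :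
    ∃ c ∈ Set.Ioo (0 : ℝ) 1,
      |a + b| ^ p = |a| ^ p + p * (|a + c * b| ^ (p - 2) * (a + c * b)) * b := by
  have hderiv (t : ℝ) : HasDerivAt (fun t => |a + t * b| ^ p)
      (p * |a + t * b| ^ (p - 2) * (a + t * b) * b) t := by
    have hline : HasDerivAt (fun t => a + t * b) b t := by
      simpa using ((hasDerivAt_id t).mul_const b).const_add a
    exact (hasDerivAt_abs_rpow (a + t * b) hp).comp t hline
  obtain ⟨c, hc, hslope⟩ := exists_hasDerivAt_eq_slope _ _ zero_lt_one
    (fun t _ => (hderiv t).continuousAt.continuousWithinAt) (fun t _ => hderiv t)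
  simp only [one_mul, zero_mul, add_zero, sub_zero, div_one] at hslope
  exact ⟨c, hc, by linear_combination -hslope⟩

noncomputable def rpowTaylorConst (p : ℝ) : ℝ := p * (p - 1) * 4 ^ (p - 2)

theorem rpowTaylorConst_nonneg {p : ℝ} (hp : 1 ≤ p) : 0 ≤ rpowTaylorConst p :=
  mul_nonneg (mul_nonneg (by linarith) (by linarith)) (by positivity)

theorem abs_add_rpow_le {p : ℝ} (hp : 2 ≤ p) (a b : ℝ) :
    |a + b| ^ p ≤ |a| ^ p + p * (|a| ^ (p - 2) * a) * b
      + rpowTaylorConst p * (|a| ^ (p - 2) * |b| ^ (2 : ℝ) + |b| ^ p) := by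
  obtain ⟨c, ⟨hc0, hc1⟩, hmvt⟩ := exists_abs_add_rpow_eq (by linarith) a b
  set u := a + c * b
  set E := (|u| + |a|) ^ (p - 2)
  have hE : 0 ≤ E := by positivity
  have hcb : (|u| ^ (p - 2) * u - |a| ^ (p - 2) * a) * b * c
      ≤ ((p - 1) * E * b ^ 2 * c) * c := by
    have := abs_rpow_sub_two_mul_sub_mul_sub_le hp u a
    rw [show u - a = c * b by ring] at this
    linarith
  have herr : (|u| ^ (p - 2) * u - |a| ^ (p - 2) * a) * b ≤ (p - 1) * E * b ^ 2 :=
    (le_of_mul_le_mul_right hcb hc0).trans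
      (mul_le_of_le_one_right (mul_nonneg (mul_nonneg (by linarith) hE) (sq_nonneg b)) hc1.le)
  have hu : |u| + |a| ≤ 2 * (|a| + |b|) := by
    have : |c * b| ≤ |b| := by
      rw [abs_mul, abs_of_pos hc0]; exact mul_le_of_le_one_left (abs_nonneg b) hc1.le
    have : |u| ≤ |a| + |c * b| := abs_add_le a (c * b)
    linarith [abs_nonneg a, abs_nonneg b]
  have hE4 : E ≤ 4 ^ (p - 2) * (|a| ^ (p - 2) + |b| ^ (p - 2)) :=
    rpow_le_four_rpow_mul_add_rpow (abs_nonneg a) (abs_nonneg b) (by positivity) hu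
      (by linarith)
  have hb2 : b ^ 2 = |b| ^ (2 : ℝ) := by rw [rpow_two, sq_abs]
  have hbp : |b| ^ (p - 2) * |b| ^ (2 : ℝ) = |b| ^ p := by
    rw [← rpow_add' (abs_nonneg b) (by linarith)]; ring_nf
  have hp1 : 0 ≤ p * (p - 1) := by nlinarith
  calc |a + b| ^ p = |a| ^ p + p * (|a| ^ (p - 2) * a) * b
        + p * ((|u| ^ (p - 2) * u - |a| ^ (p - 2) * a) * b) := by rw [hmvt]; ring
    _ ≤ |a| ^ p + p * (|a| ^ (p - 2) * a) * b + p * (p - 1) * E * b ^ 2 := by nlinarith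
    _ ≤ |a| ^ p + p * (|a| ^ (p - 2) * a) * b
        + p * (p - 1) * (4 ^ (p - 2) * (|a| ^ (p - 2) + |b| ^ (p - 2))) * b ^ 2 := by gcongr
    _ = _ := by rw [rpowTaylorConst, hb2, ← hbp]; ring

end Real

open Real

namespace MeasureTheory

variable {Ω : Type*} [MeasurableSpace Ω] {μ : Measure Ω} {f g : Ω → ℝ} {p : ℝ}

theorem MemLp.integrable_abs_rpow (hf : MemLp f (ENNReal.ofReal p) μ) (hp : 0 < p) :
    Integrable (fun ω => |f ω| ^ p) μ := by
  simpa [ENNReal.toReal_ofReal hp.le] using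
    hf.integrable_norm_rpow (by simpa using hp) ENNReal.ofReal_ne_top

theorem MemLp.integrable_abs_rpow_mul_abs_rpow [IsFiniteMeasure μ]
    (hf : MemLp f (ENNReal.ofReal p) μ) (hg : MemLp g (ENNReal.ofReal p) μ) (hp : 0 < p)
    {α β : ℝ} (hα : 0 ≤ α) (hβ : 0 ≤ β) (hαβ : α + β ≤ p) :
    Integrable (fun ω => |f ω| ^ α * |g ω| ^ β) μ := by
  refine Integrable.mono' (((integrable_const 1).add (hf.integrable_abs_rpow hp)).add
    (hg.integrable_abs_rpow hp)) ?_ (ae_of_all _ fun ω => ?_)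
  · exact ((continuous_abs.rpow_const fun _ => .inr hα).comp_aestronglyMeasurable hf.1).mul
      ((continuous_abs.rpow_const fun _ => .inr hβ).comp_aestronglyMeasurable hg.1)
  · rw [Real.norm_of_nonneg (by positivity)]
    exact rpow_mul_rpow_le_one_add_rpow_add_rpow (abs_nonneg _) (abs_nonneg _) hα hβ hαβ

theorem MemLp.integrable_abs_rpow_sub_two_mul_self_mul [IsFiniteMeasure μ]
    (hf : MemLp f (ENNReal.ofReal p) μ) (hg : MemLp g (ENNReal.ofReal p) μ) (hp : 2 ≤ p) :
    Integrable (fun ω => |f ω| ^ (p - 2) * f ω * g ω) μ := by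
  refine (hf.integrable_abs_rpow_mul_abs_rpow hg (by linarith) (α := p - 1) (β := 1)
    (by linarith) zero_le_one (by linarith)).mono' ?_ (ae_of_all _ fun ω => le_of_eq ?_)
  · exact ((continuous_abs_rpow_mul_self (by linarith)).comp_aestronglyMeasurable hf.1).mul hg.1
  · rw [Real.norm_eq_abs, abs_mul, abs_mul, abs_of_nonneg (by positivity), rpow_one,
      rpow_sub_two_mul_self (abs_nonneg _) (by linarith)]

theorem integral_abs_rpow_le_rpow_integral_abs_rpow [IsProbabilityMeasure μ]
    (hf : MemLp f (ENNReal.ofReal p) μ) {q : ℝ} (hq : 0 ≤ q) (hqp : q ≤ p) :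
    ∫ ω, |f ω| ^ q ∂μ ≤ (∫ ω, |f ω| ^ p ∂μ) ^ (q / p) := by
  rcases hq.eq_or_lt with rfl | hq
  · simp
  have hp : 0 < p := hq.trans_le hqp
  have hfq : Integrable (fun ω => |f ω| ^ q) μ :=
    (hf.mono_exponent (ENNReal.ofReal_le_ofReal hqp)).integrable_abs_rpow hq
  have hpow (ω : Ω) : (|f ω| ^ q) ^ (p / q) = |f ω| ^ p := by
    rw [← rpow_mul (abs_nonneg _), mul_div_cancel₀ _ hq.ne']
  have jensen : (∫ ω, |f ω| ^ q ∂μ) ^ (p / q) ≤ ∫ ω, |f ω| ^ p ∂μ := by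
    have := (convexOn_rpow ((one_le_div hq).2 hqp)).map_integral_le
      (continuousOn_id.rpow_const fun _ _ => .inr (div_pos hp hq).le) isClosed_Ici
      (ae_of_all _ fun ω => Set.mem_Ici.2 (rpow_nonneg (abs_nonneg (f ω)) q)) hfq
      (by simpa [Function.comp_def, hpow] using hf.integrable_abs_rpow hp)
    simpa [hpow] using this
  calc ∫ ω, |f ω| ^ q ∂μ = ((∫ ω, |f ω| ^ q ∂μ) ^ (p / q)) ^ (q / p) := by
        rw [← rpow_mul (integral_nonneg fun ω => by positivity),
          show p / q * (q / p) = 1 by field_simp, rpow_one]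
    _ ≤ (∫ ω, |f ω| ^ p ∂μ) ^ (q / p) := by gcongr

end MeasureTheory

namespace ProbabilityTheory

variable {Ω : Type*} [MeasurableSpace Ω] {μ : Measure Ω} [IsProbabilityMeasure μ] {p : ℝ}

theorem IndepFun.integral_abs_add_rpow_le {S Y : Ω → ℝ} (hind : IndepFun S Y μ) (hp : 2 ≤ p)
    (hS : MemLp S (ENNReal.ofReal p) μ) (hY : MemLp Y (ENNReal.ofReal p) μ)
    (hY0 : ∫ ω, Y ω ∂μ = 0) :
    ∫ ω, |S ω + Y ω| ^ p ∂μ ≤ ∫ ω, |S ω| ^ p ∂μ + rpowTaylorConst p *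
      ((∫ ω, |S ω| ^ p ∂μ) ^ ((p - 2) / p) * (∫ ω, |Y ω| ^ p ∂μ) ^ (2 / p)
        + ∫ ω, |Y ω| ^ p ∂μ) := by
  have hp0 : 0 < p := by linarith
  set D := rpowTaylorConst p
  have hD : 0 ≤ D := rpowTaylorConst_nonneg (by linarith)
  have hcross := hS.integrable_abs_rpow_sub_two_mul_self_mul hY hp
  have hsq : Integrable (fun ω => |S ω| ^ (p - 2) * |Y ω| ^ (2 : ℝ)) μ :=
    hS.integrable_abs_rpow_mul_abs_rpow hY hp0 (by linarith) zero_le_two (by linarith)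
  have hcross0 : ∫ ω, |S ω| ^ (p - 2) * S ω * Y ω ∂μ = 0 := by
    rw [hind.integral_fun_comp_mul_comp (g := fun y => y) hS.1.aemeasurable hY.1.aemeasurable
      (continuous_abs_rpow_mul_self (by linarith)).aestronglyMeasurable aestronglyMeasurable_id,
      hY0, mul_zero]
  have hsplit : ∫ ω, |S ω| ^ (p - 2) * |Y ω| ^ (2 : ℝ) ∂μ
      = (∫ ω, |S ω| ^ (p - 2) ∂μ) * ∫ ω, |Y ω| ^ (2 : ℝ) ∂μ :=
    hind.integral_fun_comp_mul_comp hS.1.aemeasurable hY.1.aemeasurable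
      (continuous_abs.rpow_const fun _ => .inr (by linarith)).aestronglyMeasurable
      (continuous_abs.rpow_const fun _ => .inr zero_le_two).aestronglyMeasurable
  have hSp := hS.integrable_abs_rpow hp0
  have hYp := hY.integrable_abs_rpow hp0
  calc ∫ ω, |S ω + Y ω| ^ p ∂μ
      ≤ ∫ ω, (|S ω| ^ p + p * (|S ω| ^ (p - 2) * S ω * Y ω)
          + D * (|S ω| ^ (p - 2) * |Y ω| ^ (2 : ℝ) + |Y ω| ^ p)) ∂μ := by
        refine integral_mono ((hS.add hY).integrable_abs_rpow hp0)
          ((hSp.fun_add (hcross.const_mul p)).fun_add ((hsq.fun_add hYp).const_mul D))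
          fun ω => (abs_add_rpow_le hp (S ω) (Y ω)).trans_eq (by ring)
    _ = ∫ ω, |S ω| ^ p ∂μ + D * ((∫ ω, |S ω| ^ (p - 2) ∂μ) * (∫ ω, |Y ω| ^ (2 : ℝ) ∂μ)
          + ∫ ω, |Y ω| ^ p ∂μ) := by
        rw [integral_add (hSp.fun_add (hcross.const_mul p)) ((hsq.fun_add hYp).const_mul D),
          integral_add hSp (hcross.const_mul p), integral_const_mul, integral_const_mul, hcross0,
          integral_add hsq hYp, hsplit, mul_zero, add_zero]
    _ ≤ _ := by
        gcongr
        · exact integral_abs_rpow_le_rpow_integral_abs_rpow hS (by linarith) (by linarith)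
        · exact integral_abs_rpow_le_rpow_integral_abs_rpow hY zero_le_two hp

theorem iIndepFun.integral_abs_finsetSum_rpow_le {ι : Type*} {X : ι → Ω → ℝ} {b : ℝ}
    (hindep : iIndepFun X μ) (hp : 2 ≤ p) (hXm : ∀ i, Measurable (X i))
    (hmean : ∀ i, ∫ ω, X i ω ∂μ = 0) (hLp : ∀ i, MemLp (X i) (ENNReal.ofReal p) μ)
    (hb : ∀ i, ∫ ω, |X i ω| ^ p ∂μ ≤ b) (s : Finset ι) :
    ∫ ω, |∑ i ∈ s, X i ω| ^ p ∂μ ≤ ((2 * rpowTaylorConst p + 1) * #s) ^ (p / 2) * b := by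
  classical
  have hp0 : 0 < p := by linarith
  induction s using Finset.induction_on with
  | empty => simp [zero_rpow hp0.ne', zero_rpow (by positivity : p / 2 ≠ 0)]
  | insert i s hi ih =>
    have hb0 : 0 ≤ b := (integral_nonneg fun ω => by positivity).trans (hb i)
    have hD := rpowTaylorConst_nonneg (by linarith : 1 ≤ p)
    have hstep := (hindep.indepFun_finsetSum_of_notMem hXm hi).integral_abs_add_rpow_le hp
      (memLp_finsetSum' s fun j _ => hLp j) (hLp i) (hmean i)
    simp only [Finset.sum_apply] at hstep
    rw [card_insert_of_notMem hi, Nat.cast_succ]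
    calc ∫ ω, |∑ j ∈ insert i s, X j ω| ^ p ∂μ = ∫ ω, |∑ j ∈ s, X j ω + X i ω| ^ p ∂μ := by
          simp_rw [sum_insert hi, add_comm]
      _ ≤ _ := hstep
      _ ≤ _ := by gcongr <;> exact hb i
      _ ≤ _ := add_mul_rpow_mul_rpow_add_le hp hD (integral_nonneg fun ω => by positivity) hb0
          (Nat.cast_nonneg _) ih

end ProbabilityTheory

/-- **Marcinkiewicz–Zygmund inequality for i.i.d. averages.**  For every real `p ≥ 2` there is a
constant `C_p > 0`, depending only on `p`, such that for every `n ≥ 1` and every i.i.d. sequence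
`X_1, …, X_n` of real random variables with `E[X_1] = 0` and `E[|X_1|^p] < ∞`, one has
`E[|(1/n) Σ_i X_i|^p] ≤ C_p E[|X_1|^p] / n^(p/2)`. -/
theorem mz_iid_average (p : ℝ) (hp : 2 ≤ p) :
    ∃ C : ℝ, 0 < C ∧
      ∀ (Ω : Type) (_ : MeasurableSpace Ω) (μ : Measure Ω), IsProbabilityMeasure μ →
        ∀ (n : ℕ) (hn : 1 ≤ n),
          ∀ (X : Fin n → Ω → ℝ), (∀ i, Measurable (X i)) →
            iIndepFun X μ →
            (∀ i j, IdentDistrib (X i) (X j) μ μ) →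
            (∀ i, ∫ ω, X i ω ∂μ = 0) →
            (∀ i, MemLp (X i) (ENNReal.ofReal p) μ) →
            ∫ ω, |(↑n)⁻¹ * ∑ i, X i ω| ^ p ∂μ ≤
              C * (∫ ω, |X ⟨0, hn⟩ ω| ^ p ∂μ) / (n : ℝ) ^ (p / 2) := by
  set L := 2 * rpowTaylorConst p + 1
  have hL : 0 < L := by linarith [rpowTaylorConst_nonneg (by linarith : 1 ≤ p)]
  refine ⟨L ^ (p / 2), by positivity, ?_⟩
  intro Ω _ μ _ n hn X hXm hindep hident hmean hLp
  set b := ∫ ω, |X ⟨0, hn⟩ ω| ^ p ∂μ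
  have hb (i : Fin n) : ∫ ω, |X i ω| ^ p ∂μ = b :=
    ((hident i ⟨0, hn⟩).comp
      (continuous_abs.rpow_const fun _ => .inr (by linarith)).measurable).integral_eq
  have hsum := hindep.integral_abs_finsetSum_rpow_le hp hXm hmean hLp (fun i => (hb i).le) univ
  rw [card_univ, Fintype.card_fin] at hsum
  have hn0 : (0 : ℝ) < n := by exact_mod_cast hn
  calc ∫ ω, |(↑n)⁻¹ * ∑ i, X i ω| ^ p ∂μ = ((n : ℝ) ^ p)⁻¹ * ∫ ω, |∑ i, X i ω| ^ p ∂μ := by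
        rw [← integral_const_mul]
        simp_rw [abs_mul, mul_rpow (abs_nonneg _) (abs_nonneg _), abs_inv, Nat.abs_cast,
          inv_rpow hn0.le]
    _ ≤ ((n : ℝ) ^ p)⁻¹ * ((L * n) ^ (p / 2) * b) := by gcongr
    _ = L ^ (p / 2) * b / n ^ (p / 2) := by
        have hsplit : (n : ℝ) ^ p = n ^ (p / 2) * n ^ (p / 2) := by
          rw [← rpow_add hn0]; ring_nf
        rw [mul_rpow hL.le hn0.le, hsplit]
        field_simp
end

section
/- Let a ∈ ℝ and let (a_n)_{n≥0} be real coefficients. Let μ ∈ ℝ, let (H_j)_{j≥1} be i.i.d. integrable real random variables with E[H_1] = μ, and let Ñ be a random variable on the nonnegative integers with P(Ñ = n) = q_n > 0 for all n, independent of (H_j). Suppose Σ_{n=0}^∞ |a_n| (E[|H_1 − a|])^n < ∞. Then the estimator (a_Ñ / q_Ñ) · ∏_{j=1}^{Ñ} (H_j − a) is integrable and its expectation equals Σ_{n=0}^∞ a_n (μ − a)^n; in particular, if g(x) = Σ_{n=0}^∞ a_n (x − a)^n with this series converging at x = μ, the estimator is unbiased for g(μ). -/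
/-!
On the event `{Nt = n}` the estimator is `coef n / q n * ∏_{j<n} (H j - a)`. As `Nt` is independent
of the i.i.d. family `H`, the integral of this over the event factors as
`q n * (coef n / q n) * (μ₀ - a) ^ n = coef n * (μ₀ - a) ^ n`, and the same computation with
absolute values gives `|coef n| * E|H 0 - a| ^ n`. Summability of the latter makes the estimator
integrable, and its integral is then the sum of the integrals over the partition `{Nt = n}`.
-/

open MeasureTheory ProbabilityTheory Finset

lemma iUnion_preimage_singleton_eq_univ {α β : Type*} (f : α → β) :
    ⋃ b, f ⁻¹' {b} = Set.univ := by
  rw [← Set.preimage_iUnion, Set.iUnion_of_singleton, Set.preimage_univ]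

section IndexedFamily

variable {Ω ι E : Type*} [MeasurableSpace Ω] {μ : Measure Ω}
  [MeasurableSpace ι] [MeasurableSingletonClass ι] [Countable ι]
  [NormedAddCommGroup E] {N : Ω → ι} {F : ι → Ω → E}

lemma integrable_indexed_of_summable_setIntegral_norm (hN : Measurable N)
    (hF : ∀ i, IntegrableOn (F i) (N ⁻¹' {i}) μ)
    (hsum : Summable fun i => ∫ ω in N ⁻¹' {i}, ‖F i ω‖ ∂μ) :
    Integrable (fun ω => F (N ω) ω) μ := by
  have hfiber : ∀ i, Set.EqOn (F i) (fun ω => F (N ω) ω) (N ⁻¹' {i}) :=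
    fun i ω (hω : N ω = i) => by simp only [hω]
  have hfiber_norm : ∀ i, ∫ ω in N ⁻¹' {i}, ‖F i ω‖ ∂μ = ∫ ω in N ⁻¹' {i}, ‖F (N ω) ω‖ ∂μ :=
    fun i => setIntegral_congr_fun (hN (measurableSet_singleton i)) fun ω hω => by rw [hfiber i hω]
  rw [← integrableOn_univ, ← iUnion_preimage_singleton_eq_univ N]
  exact integrableOn_iUnion_of_summable_integral_norm
    (fun i => (hF i).congr_fun (hfiber i) (hN (measurableSet_singleton i)))
    (by simpa only [hfiber_norm] using hsum)

lemma integral_indexed_eq_tsum_setIntegral [NormedSpace ℝ E] (hN : Measurable N)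
    (hint : Integrable (fun ω => F (N ω) ω) μ) :
    ∫ ω, F (N ω) ω ∂μ = ∑' i, ∫ ω in N ⁻¹' {i}, F i ω ∂μ := by
  rw [← setIntegral_univ, ← iUnion_preimage_singleton_eq_univ N,
    integral_iUnion (fun i => hN (measurableSet_singleton i)) (pairwise_disjoint_fiber N)
      hint.integrableOn]
  refine tsum_congr fun i => setIntegral_congr_fun (hN (measurableSet_singleton i)) ?_
  intro ω (hω : N ω = i)
  simp only [hω]

end IndexedFamily

namespace ProbabilityTheory

lemma IndepFun.setIntegral_preimage_eq_mul {Ω β γ : Type*} [MeasurableSpace Ω]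
    {μ : Measure Ω} [MeasurableSpace β] [MeasurableSpace γ] {N : Ω → β} {X : Ω → γ}
    (h : IndepFun N X μ) (hN : Measurable N) (hX : AEMeasurable X μ)
    {s : Set β} (hs : MeasurableSet s) {f : γ → ℝ} (hf : AEStronglyMeasurable f (μ.map X)) :
    ∫ ω in N ⁻¹' s, f (X ω) ∂μ = μ.real (N ⁻¹' s) * ∫ ω, f (X ω) ∂μ :=
  ((IndepFun_iff_Indep N X μ).1 h).setIntegral_eq_mul hN.comap_le hX ⟨s, hs, rfl⟩ hf

section Products

variable {Ω ι : Type*} [MeasurableSpace Ω] {μ : Measure Ω} {X : ι → Ω → ℝ}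

lemma iIndepFun.integrable_finset_prod (hX : iIndepFun X μ) (hm : ∀ i, Measurable (X i))
    (hint : ∀ i, Integrable (X i) μ) (s : Finset ι) :
    Integrable (fun ω => ∏ i ∈ s, X i ω) μ := by
  classical
  have := hX.isProbabilityMeasure
  induction s using Finset.induction_on with
  | empty => simp
  | insert i s hi ih =>
    simp only [prod_insert hi]
    have hindep := (hX.indepFun_finsetProd_of_notMem hm hi).symm
    rw [Finset.prod_fn] at hindep
    exact hindep.integrable_mul (hint i) ih

lemma iIndepFun.integral_finset_prod (hX : iIndepFun X μ) (hm : ∀ i, AEStronglyMeasurable (X i) μ)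
    (s : Finset ι) :
    ∫ ω, ∏ i ∈ s, X i ω ∂μ = ∏ i ∈ s, ∫ ω, X i ω ∂μ := by
  simpa only [← prod_coe_sort s] using
    (hX.precomp Subtype.val_injective).integral_fun_prod_eq_prod_integral (fun i : s => hm i)

end Products

section IdenticallyDistributed

variable {Ω β : Type*} [MeasurableSpace Ω] [MeasurableSpace β] {μ : Measure Ω}
  {X : ℕ → Ω → β} {f : β → ℝ}

lemma iIndepFun.integrable_prod_range_comp (hX : iIndepFun X μ) (hm : ∀ j, Measurable (X j))
    (hident : ∀ j, IdentDistrib (X j) (X 0) μ μ) (hf : Measurable f)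
    (hint : Integrable (fun ω => f (X 0 ω)) μ) (n : ℕ) :
    Integrable (fun ω => ∏ j ∈ range n, f (X j ω)) μ :=
  (hX.comp (fun _ => f) fun _ => hf).integrable_finset_prod (fun j => hf.comp (hm j))
    (fun j => ((hident j).comp hf).integrable_iff.2 hint) _

lemma iIndepFun.integral_prod_range_comp (hX : iIndepFun X μ) (hm : ∀ j, Measurable (X j))
    (hident : ∀ j, IdentDistrib (X j) (X 0) μ μ) (hf : Measurable f) (n : ℕ) :
    ∫ ω, ∏ j ∈ range n, f (X j ω) ∂μ = (∫ ω, f (X 0 ω) ∂μ) ^ n :=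
  calc ∫ ω, ∏ j ∈ range n, f (X j ω) ∂μ = ∏ j ∈ range n, ∫ ω, f (X j ω) ∂μ :=
        (hX.comp (fun _ => f) fun _ => hf).integral_finset_prod
          (fun j => (hf.comp (hm j)).aestronglyMeasurable) _
    _ = ∏ _j ∈ range n, ∫ ω, f (X 0 ω) ∂μ :=
        prod_congr rfl fun j _ => ((hident j).comp hf).integral_eq
    _ = (∫ ω, f (X 0 ω) ∂μ) ^ n := by rw [prod_const, card_range]

lemma IndepFun.setIntegral_preimage_singleton_prod_range_comp {N : Ω → ℕ} (hN : Measurable N)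
    (hNX : IndepFun N (fun ω j => X j ω) μ) (hX : iIndepFun X μ) (hm : ∀ j, Measurable (X j))
    (hident : ∀ j, IdentDistrib (X j) (X 0) μ μ) (hf : Measurable f) (n : ℕ) :
    ∫ ω in N ⁻¹' {n}, ∏ j ∈ range n, f (X j ω) ∂μ
      = μ.real (N ⁻¹' {n}) * (∫ ω, f (X 0 ω) ∂μ) ^ n := by
  have hprod : Measurable fun x : ℕ → β => ∏ j ∈ range n, f (x j) :=
    Finset.measurable_prod _ fun j _ => hf.comp (measurable_pi_apply j)
  rw [hNX.setIntegral_preimage_eq_mul hN (measurable_pi_lambda _ hm).aemeasurable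
    (measurableSet_singleton n) hprod.aestronglyMeasurable,
    hX.integral_prod_range_comp hm hident hf]

end IdenticallyDistributed

end ProbabilityTheory

/-- **Unbiased power-series (Poisson-type) estimator.**  Let `g(x) = Σ_n coef_n (x − a)^n`,
let `(H_j)_{j≥1}` be i.i.d. integrable with mean `μ₀`, and let `Nt` be a random level with
`P(Nt = n) = q_n > 0`, independent of `(H_j)`.  If `Σ_n |coef_n| (E[|H_1 − a|])^n < ∞`, then
the estimator `(coef_Nt / q_Nt) Π_{j=1}^{Nt} (H_j − a)` is integrable with expectation
`Σ_n coef_n (μ₀ − a)^n`, i.e. it is unbiased for `g(μ₀)`.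
(Here `H 0` plays the role of `H_1`.) -/
theorem power_series_unbiased
    {Ω : Type*} [MeasurableSpace Ω] (μ : Measure Ω) [IsProbabilityMeasure μ]
    (a : ℝ) (coef : ℕ → ℝ)
    (H : ℕ → Ω → ℝ) (hHmeas : ∀ j, Measurable (H j))
    (hindep : iIndepFun H μ)
    (hident : ∀ j, IdentDistrib (H j) (H 0) μ μ)
    (hHint : Integrable (H 0) μ)
    (μ₀ : ℝ) (hμ₀ : μ₀ = ∫ ω, H 0 ω ∂μ)
    (q : ℕ → ℝ) (hq : ∀ n, 0 < q n)
    (Nt : Ω → ℕ) (hNtmeas : Measurable Nt)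
    (hNtlaw : ∀ n : ℕ, μ {ω | Nt ω = n} = ENNReal.ofReal (q n))
    (hNtindep : IndepFun Nt (fun ω => fun j => H j ω) μ)
    (hsum : Summable fun n : ℕ => |coef n| * (∫ ω, |H 0 ω - a| ∂μ) ^ n) :
    Integrable (fun ω => coef (Nt ω) / q (Nt ω) * ∏ j ∈ Finset.range (Nt ω), (H j ω - a)) μ ∧
    ∫ ω, coef (Nt ω) / q (Nt ω) * ∏ j ∈ Finset.range (Nt ω), (H j ω - a) ∂μ =
      ∑' n : ℕ, coef n * (μ₀ - a) ^ n := by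
  have hlaw : ∀ n, μ.real (Nt ⁻¹' {n}) = q n := fun n =>
    (congrArg ENNReal.toReal (hNtlaw n)).trans (ENNReal.toReal_ofReal (hq n).le)
  have hlevel : ∀ n {f : ℝ → ℝ}, Measurable f →
      ∫ ω in Nt ⁻¹' {n}, ∏ j ∈ range n, f (H j ω) ∂μ = q n * (∫ ω, f (H 0 ω) ∂μ) ^ n :=
    fun n _ hf => by
      rw [hNtindep.setIntegral_preimage_singleton_prod_range_comp hNtmeas hindep hHmeas hident hf,
        hlaw]
  have hshift : ∫ ω, (H 0 ω - a) ∂μ = μ₀ - a := by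
    rw [integral_sub hHint (integrable_const a), integral_const, hμ₀, probReal_univ, one_smul]
  have hintegrable : ∀ n, Integrable (fun ω => coef n / q n * ∏ j ∈ range n, (H j ω - a)) μ :=
    fun n => (hindep.integrable_prod_range_comp hHmeas hident (measurable_id.sub_const a)
      (hHint.sub (integrable_const a)) n).const_mul _
  have hnorm : ∀ n, ∫ ω in Nt ⁻¹' {n}, ‖coef n / q n * ∏ j ∈ range n, (H j ω - a)‖ ∂μ
      = |coef n| * (∫ ω, |H 0 ω - a| ∂μ) ^ n := by
    intro n
    simp only [Real.norm_eq_abs, abs_mul, abs_div, abs_of_pos (hq n), abs_prod]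
    rw [integral_const_mul, hlevel n (f := fun x => |x - a|) (measurable_id.sub_const a).abs]
    field_simp [(hq n).ne']
  have hmean : ∀ n, ∫ ω in Nt ⁻¹' {n}, coef n / q n * ∏ j ∈ range n, (H j ω - a) ∂μ
      = coef n * (μ₀ - a) ^ n := by
    intro n
    rw [integral_const_mul, hlevel n (f := (· - a)) (measurable_id.sub_const a), hshift]
    field_simp [(hq n).ne']
  have hint := integrable_indexed_of_summable_setIntegral_norm
    (F := fun n ω => coef n / q n * ∏ j ∈ range n, (H j ω - a)) hNtmeas
    (fun n => (hintegrable n).integrableOn) (by simpa only [hnorm] using hsum)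
  exact ⟨hint, (integral_indexed_eq_tsum_setIntegral hNtmeas hint).trans (tsum_congr hmean)⟩
end
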